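/- Let A be a finite set with |A| = q, and let C, D be clonoids from A to the two-element lattice ({0,1}, ∧, ∨) (each closed under function minors, with each arity part closed under pointwise ∧ and ∨, containing the constant functions 0 and 1). Then C = D if and only if C^{[q²]} = D^{[q²]}, i.e., C and D agree on functions of arity |A|². -/
import Mathlib


/-- A clonoid from a set `A` to the two-element lattice `Bool`: a set of finitary
`Bool`-valued functions closed under function minors, whose arity parts are sublattices
of the pointwise lattice containing the constant functions. -/
def IsClonoid {A : Type*} (C : ∀ n : ℕ, Set ((Fin n → A) → Bool)) : Prop :=
  (∀ (n m : ℕ) (σ : Fin n → Fin m) (f : (Fin n → A) → Bool),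
      f ∈ C n → (fun a => f (a ∘ σ)) ∈ C m) ∧
  (∀ n : ℕ, (fun _ => false) ∈ C n ∧ (fun _ => true) ∈ C n) ∧
  (∀ (n : ℕ) (f g : (Fin n → A) → Bool), f ∈ C n → g ∈ C n → f ⊓ g ∈ C n ∧ f ⊔ g ∈ C n)

lemma finsetSup_mem {A : Type*} {n : ℕ} {D : ∀ n : ℕ, Set ((Fin n → A) → Bool)}
    (hD : IsClonoid D) {ι : Type*} (s : Finset ι) (g : ι → (Fin n → A) → Bool)
    (hg : ∀ i ∈ s, g i ∈ D n) : s.sup g ∈ D n := by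
  refine Finset.sup_induction ?_ ?_ hg
  · exact (hD.2.1 n).1
  · intro a ha b hb; exact (hD.2.2 n a b ha hb).2

lemma finsetInf_mem {A : Type*} {n : ℕ} {D : ∀ n : ℕ, Set ((Fin n → A) → Bool)}
    (hD : IsClonoid D) {ι : Type*} (s : Finset ι) (g : ι → (Fin n → A) → Bool)
    (hg : ∀ i ∈ s, g i ∈ D n) : s.inf g ∈ D n := by
  refine Finset.inf_induction ?_ ?_ hg
  · exact (hD.2.1 n).2
  · intro a ha b hb; exact (hD.2.2 n a b ha hb).1

/-- The key minor construction: identifying variables with the same `(a i, b i)` pattern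
gives a minor factoring through arity `|A|²`. -/
lemma minor_mem {A : Type*} [Fintype A]
    (C D : ∀ n : ℕ, Set ((Fin n → A) → Bool)) (hC : IsClonoid C) (hD : IsClonoid D)
    (h : C (Fintype.card A ^ 2) = D (Fintype.card A ^ 2))
    (n : ℕ) [Nonempty (Fin n)] (f : (Fin n → A) → Bool) (hf : f ∈ C n)
    (a b : Fin n → A) :
    ∃ r : Fin n → Fin n, (∀ i, a (r i) = a i ∧ b (r i) = b i) ∧
      (fun x => f (x ∘ r)) ∈ D n := by
  classical
  have hcard : Fintype.card (A × A) = Fintype.card A ^ 2 := by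
    simp [Fintype.card_prod, sq]
  let e : A × A ≃ Fin (Fintype.card A ^ 2) := Fintype.equivFinOfCardEq hcard
  let τ : Fin n → Fin (Fintype.card A ^ 2) := fun i => e (a i, b i)
  let μ : Fin (Fintype.card A ^ 2) → Fin n :=
    fun j => if hj : ∃ i, τ i = j then hj.choose else Classical.arbitrary _
  refine ⟨μ ∘ τ, ?_, ?_⟩
  · intro i
    have hex : ∃ i', τ i' = τ i := ⟨i, rfl⟩
    have hτ : τ (μ (τ i)) = τ i := by
      simp only [μ, dif_pos hex]
      exact hex.choose_spec
    have hp : (a (μ (τ i)), b (μ (τ i))) = (a i, b i) := e.injective hτ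
    exact ⟨congrArg Prod.fst hp, congrArg Prod.snd hp⟩
  · have h1 : (fun y : Fin (Fintype.card A ^ 2) → A => f (y ∘ τ)) ∈
        C (Fintype.card A ^ 2) := hC.1 n _ τ f hf
    rw [h] at h1
    exact hD.1 _ n μ _ h1

lemma clonoid_subset {A : Type*} [Fintype A]
    (C D : ∀ n : ℕ, Set ((Fin n → A) → Bool)) (hC : IsClonoid C) (hD : IsClonoid D)
    (h : C (Fintype.card A ^ 2) = D (Fintype.card A ^ 2))
    (n : ℕ) (f : (Fin n → A) → Bool) (hf : f ∈ C n) : f ∈ D n := by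
  classical
  by_cases hT : ∀ x, f x = true
  · have : f = (fun _ => true) := funext hT
    rw [this]; exact (hD.2.1 n).2
  by_cases hF : ∀ x, f x = false
  · have : f = (fun _ => false) := funext hF
    rw [this]; exact (hD.2.1 n).1
  push_neg at hT hF
  obtain ⟨b0, hb0⟩ := hT
  obtain ⟨a0, ha0⟩ := hF
  have hb0 : f b0 = false := by simpa using hb0
  have ha0 : f a0 = true := by simpa using ha0
  have hab : a0 ≠ b0 := by
    intro hh; rw [hh, hb0] at ha0; exact absurd ha0 (by simp)
  haveI : Nonempty (Fin n) := by
    obtain ⟨i, _⟩ := Function.ne_iff.1 hab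
    exact ⟨i⟩
  choose r hr hg using fun a b => minor_mem C D hC hD h n f hf a b
  set T : Finset (Fin n → A) := Finset.univ.filter (fun x => f x = true) with hTdef
  set F : Finset (Fin n → A) := Finset.univ.filter (fun x => f x = false) with hFdef
  have key : ∀ (a b x : Fin n → A), x = a ∨ x = b → f (x ∘ r a b) = f x := by
    rintro a b x (rfl | rfl)
    · congr 1; funext i; exact (hr x b i).1
    · congr 1; funext i; exact (hr a x i).2
  have hfeq : f = T.sup (fun a => F.inf (fun b => fun x => f (x ∘ r a b))) := by
    funext x
    rw [Finset.sup_apply]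
    simp only [Finset.inf_apply]
    by_cases hx : f x = true
    · rw [hx]
      symm
      have hinf : F.inf (fun b => f (x ∘ r x b)) = ⊤ :=
        (Finset.inf_eq_top_iff _ _).2 (fun b _ => by
          show f (x ∘ r x b) = ⊤
          rw [key x b x (Or.inl rfl)]; exact hx)
      have hmem : x ∈ T := by simp [hTdef, hx]
      have hle : (F.inf fun b => f (x ∘ r x b)) ≤
          T.sup fun a => F.inf fun b => f (x ∘ r a b) :=
        Finset.le_sup (f := fun a => F.inf (fun b => f (x ∘ r a b))) hmem
      rw [hinf] at hle
      exact top_le_iff.1 hle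
    · have hx' : f x = false := by simpa using hx
      rw [hx']
      have hxF : x ∈ F := by simp [hFdef, hx']
      have hle : T.sup (fun a => F.inf fun b => f (x ∘ r a b)) ≤ ⊥ := by
        refine Finset.sup_le ?_
        intro a _
        have h2 : (F.inf fun b => f (x ∘ r a b)) ≤ f (x ∘ r a x) :=
          Finset.inf_le (f := fun b => f (x ∘ r a b)) hxF
        rw [key a x x (Or.inr rfl), hx'] at h2
        exact h2
      exact (le_bot_iff.1 hle).symm
  rw [hfeq]
  refine finsetSup_mem hD _ _ ?_
  intro a _
  refine finsetInf_mem hD _ _ ?_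
  intro b _
  exact hg a b

/-- Sparks' theorem for the two-element lattice: two clonoids from a finite set `A`
to the two-element lattice are equal iff they agree on functions of arity `|A|²`. -/
theorem clonoid_eq_iff_card_sq {A : Type*} [Fintype A]
    (C D : ∀ n : ℕ, Set ((Fin n → A) → Bool)) (hC : IsClonoid C) (hD : IsClonoid D) :
    C = D ↔ C (Fintype.card A ^ 2) = D (Fintype.card A ^ 2) := by
  constructor
  · intro h; rw [h]
  · intro h
    funext n
    exact Set.Subset.antisymm
      (fun f hf => clonoid_subset C D hC hD h n f hf)
      (fun f hf => clonoid_subset D C hD hC h.symm n f hf)
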